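/- Richter's formula at the matrix-element level: for all natural numbers n, m and Fock states |p⟩, |q⟩, ⟨p| a†ⁿ a^m |q⟩ = C(n+m,n)⁻¹ (1/π)∫₀^π (1/√(2^{n+m})) ⟨p| H_{n+m}(√2 X_φ) |q⟩ e^{iφ(m−n)} dφ. -/

import Mathlib

/-- Annihilation operator on Fock space (sequences): `(a ψ)(n) = √(n+1) ψ(n+1)`. -/
noncomputable def aOp : Module.End ℂ (ℕ → ℂ) where
  toFun ψ := fun n => (Real.sqrt (n + 1) : ℂ) * ψ (n + 1)
  map_add' ψ χ := by funext n; simp [mul_add]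
  map_smul' c ψ := by funext n; simp [Pi.smul_apply, smul_eq_mul]; ring

/-- Creation operator on Fock space (sequences): `(a† ψ)(n) = √n ψ(n-1)`, `0` at `n = 0`. -/
noncomputable def adOp : Module.End ℂ (ℕ → ℂ) where
  toFun ψ := fun n => if n = 0 then 0 else (Real.sqrt n : ℂ) * ψ (n - 1)
  map_add' ψ χ := by funext n; by_cases h : n = 0 <;> simp [h, mul_add]
  map_smul' c ψ := by
    funext n; by_cases h : n = 0 <;> simp [h, Pi.smul_apply, smul_eq_mul]; ring

/-- The quadrature operator `X_φ = (a† e^{iφ} + a e^{-iφ})/2`. -/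
noncomputable def Xquad (φ : ℝ) : Module.End ℂ (ℕ → ℂ) :=
  (2 : ℂ)⁻¹ • (Complex.exp (Complex.I * φ) • adOp + Complex.exp (-(Complex.I * φ)) • aOp)

/-- Physicists' Hermite polynomials as polynomials over `ℤ`:
`H_0 = 1`, `H_{n+1} = 2X·H_n - H_n'`. -/
noncomputable def physHermite : ℕ → Polynomial ℤ
  | 0 => 1
  | n + 1 => 2 * Polynomial.X * physHermite n - Polynomial.derivative (physHermite n)

/-- The Fock basis vector `|q⟩`. -/
noncomputable def fock (q : ℕ) : ℕ → ℂ := fun i => if i = q then 1 else 0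

/-! With `c = e^{-iφ} a` and `d = e^{iφ} a†` one has `[c, d] = 1` and `2 X_φ = d + c`.
Comparing the three-term recurrence `H_{k+2}(y) = 2y H_{k+1}(y) - 2(k+1) H_k(y)` with the identity
`(d + c) :(d + c)^{k+1}: = :(d + c)^{k+2}: + (k+1) :(d + c)^k:`, which follows from `[c, d] = 1`,
gives `H_k(√2 X_φ) = 2^{k/2} :(d + c)^k: = 2^{k/2} ∑ C(k,i) e^{iφ(i-j)} a†^i a^j` (sum over
`i + j = k`). Multiplying by `e^{iφ(m-n)}` turns the phase of the `(i, j)` term into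
`e^{2iφ(i-n)}`, and integration over `[0, π]` keeps only the term `(i, j) = (n, m)`. -/

open Finset Polynomial

lemma physHermite_succ (n : ℕ) :
    physHermite (n + 1) = 2 * X * physHermite n - derivative (physHermite n) := rfl

lemma derivative_physHermite_succ (n : ℕ) :
    derivative (physHermite (n + 1)) = 2 * (n + 1 : ℤ[X]) * physHermite n := by
  induction n with
  | zero => simp [physHermite]
  | succ n ih =>
    rw [physHermite_succ (n + 1), derivative_sub, derivative_mul, ih, physHermite_succ n]
    simp only [derivative_mul, derivative_ofNat, derivative_X, derivative_add, derivative_natCast,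
      derivative_one]
    push_cast
    ring

lemma physHermite_succ_succ (n : ℕ) :
    physHermite (n + 2) = 2 * X * physHermite (n + 1) - 2 * (n + 1 : ℤ[X]) * physHermite n := by
  rw [physHermite_succ (n + 1), derivative_physHermite_succ]

section NormalOrdering

variable {R A : Type*} [CommRing R] [Ring A] [Algebra R A]

/-- The normal-ordered power `:(d + c)^k:`, with every `d` to the left of every `c`. -/
noncomputable def normalOrderedPow (d c : A) (k : ℕ) : A :=
  ∑ ij ∈ antidiagonal k, k.choose ij.1 • (d ^ ij.1 * c ^ ij.2)

variable (d c : A)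

lemma normalOrderedPow_zero : normalOrderedPow d c 0 = 1 := by
  simp [normalOrderedPow]

lemma normalOrderedPow_succ (k : ℕ) :
    normalOrderedPow d c (k + 1) = d * normalOrderedPow d c k + normalOrderedPow d c k * c := by
  rw [normalOrderedPow, sum_antidiagonal_choose_succ_nsmul (fun i j => d ^ i * c ^ j), add_comm,
    normalOrderedPow, mul_sum, sum_mul]
  congr 1 <;> refine sum_congr rfl fun ij hij => ?_
  · rw [k.choose_symm_of_eq_add (mem_antidiagonal.1 hij).symm, mul_smul_comm, pow_succ',
      mul_assoc]
  · rw [smul_mul_assoc, pow_succ, mul_assoc]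

lemma normalOrderedPow_smul_smul (u v : R) (k : ℕ) :
    normalOrderedPow (u • d) (v • c) k
      = ∑ ij ∈ antidiagonal k,
          (u ^ ij.1 * v ^ ij.2) • k.choose ij.1 • (d ^ ij.1 * c ^ ij.2) := by
  refine sum_congr rfl fun ij _ => ?_
  rw [_root_.smul_pow, _root_.smul_pow, smul_mul_smul_comm, smul_comm]

variable {d c}

lemma mul_normalOrderedPow_succ (h : c * d = d * c + 1) (k : ℕ) :
    c * normalOrderedPow d c (k + 1)
      = normalOrderedPow d c (k + 1) * c + (k + 1) • normalOrderedPow d c k := by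
  induction k with
  | zero =>
    simp only [normalOrderedPow_succ, normalOrderedPow_zero]
    rw [zero_add, one_smul, mul_one, one_mul, mul_add, h]
    noncomm_ring
  | succ k ih =>
    have hsucc := normalOrderedPow_succ d c
    calc c * normalOrderedPow d c (k + 2)
        = (c * d) * normalOrderedPow d c (k + 1) + (c * normalOrderedPow d c (k + 1)) * c := by
          rw [hsucc (k + 1), mul_add, mul_assoc, mul_assoc]
      _ = (d * normalOrderedPow d c (k + 1) + normalOrderedPow d c (k + 1) * c) * c
            + (k + 1) • (d * normalOrderedPow d c k + normalOrderedPow d c k * c)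
            + normalOrderedPow d c (k + 1) := by
          rw [h, add_mul, one_mul, mul_assoc, ih]
          simp only [mul_add, add_mul, mul_smul_comm, smul_mul_assoc, mul_assoc, smul_add]
          abel
      _ = normalOrderedPow d c (k + 1 + 1) * c + (k + 1 + 1) • normalOrderedPow d c (k + 1) := by
          rw [← hsucc, ← hsucc, succ_nsmul _ (k + 1), add_assoc]

lemma add_mul_normalOrderedPow_succ (h : c * d = d * c + 1) (k : ℕ) :
    (d + c) * normalOrderedPow d c (k + 1)
      = normalOrderedPow d c (k + 2) + (k + 1) • normalOrderedPow d c k := by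
  rw [add_mul, mul_normalOrderedPow_succ h, normalOrderedPow_succ d c (k + 1), add_assoc]

lemma aeval_physHermite_eq_smul_normalOrderedPow {s : R} (hs : s * s = 2) {y : A}
    (hy : s • y = d + c) (h : c * d = d * c + 1) (k : ℕ) :
    aeval y (physHermite k) = s ^ k • normalOrderedPow d c k := by
  have two_smul_y : (2 : A) * y = s • (d + c) := by
    rw [two_mul, ← two_smul R, ← hs, ← smul_smul, hy]
  induction k using Nat.twoStepInduction with
  | zero => simp [physHermite, normalOrderedPow_zero]
  | one =>
    rw [physHermite_succ, physHermite, derivative_one, sub_zero, mul_one, map_mul, map_ofNat,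
      aeval_X, two_smul_y, normalOrderedPow_succ, normalOrderedPow_zero, pow_one, mul_one, one_mul]
  | more k ih₀ ih₁ =>
    have two_mul_succ_mul (x : A) : (2 * (k + 1 : A)) * x = (s * s) • (k + 1) • x := by
      rw [hs, two_smul, nsmul_eq_mul, Nat.cast_succ, two_mul, add_mul]
    calc aeval y (physHermite (k + 2))
        = (2 * y) * aeval y (physHermite (k + 1))
            - (2 * (k + 1 : A)) * aeval y (physHermite k) := by
          simp only [physHermite_succ_succ, aeval_sub, map_mul, map_ofNat, aeval_X, map_add,
            map_natCast, map_one]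
      _ = s ^ (k + 1) • s • ((d + c) * normalOrderedPow d c (k + 1))
            - s ^ k • (s * s) • (k + 1) • normalOrderedPow d c k := by
          rw [ih₀, ih₁, two_smul_y, mul_smul_comm, mul_smul_comm, two_mul_succ_mul,
            smul_mul_assoc]
      _ = s ^ (k + 2)
            • ((d + c) * normalOrderedPow d c (k + 1) - (k + 1) • normalOrderedPow d c k) := by
          module
      _ = s ^ (k + 2) • normalOrderedPow d c (k + 2) := by
          rw [add_mul_normalOrderedPow_succ h, add_sub_cancel_right]

end NormalOrdering

lemma aOp_mul_adOp : aOp * adOp = adOp * aOp + 1 := by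
  ext ψ j
  simp only [Module.End.mul_apply, LinearMap.add_apply, Module.End.one_apply, aOp, adOp,
    LinearMap.coe_mk, AddHom.coe_mk, Pi.add_apply]
  rcases j with _ | j
  · simp
  · have sqrt_mul_self {x : ℝ} (hx : 0 ≤ x) : (√x : ℂ) * √x = x := by
      rw [← Complex.ofReal_mul, Real.mul_self_sqrt hx]
    simp only [Nat.succ_ne_zero, if_false, Nat.add_sub_cancel, ← mul_assoc]
    push_cast
    rw [sqrt_mul_self (by positivity), sqrt_mul_self (by positivity)]
    push_cast
    ring

open Complex

lemma integral_exp_two_int_mul_I (z : ℤ) :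
    ∫ φ in (0 : ℝ)..Real.pi, exp (2 * z * I * φ) = if z = 0 then (Real.pi : ℂ) else 0 := by
  split_ifs with hz
  · simp [hz]
  · have hc : 2 * z * I ≠ 0 := by simp [hz, I_ne_zero]
    have hperiod : 2 * z * I * (Real.pi : ℝ) = z * (2 * Real.pi * I) := by ring
    rw [integral_exp_mul_complex hc, hperiod, exp_int_mul_two_pi_mul_I, ofReal_zero, mul_zero,
      exp_zero, sub_self, zero_div]

lemma Real.sqrt_two_pow (k : ℕ) : √(2 ^ k) = √2 ^ k := by
  rw [← Real.sqrt_sq (pow_nonneg (Real.sqrt_nonneg 2) k), ← pow_mul, mul_comm, pow_mul,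
    Real.sq_sqrt zero_le_two]

lemma aeval_physHermite_sqrt_two_smul_Xquad (φ : ℝ) (k : ℕ) :
    aeval ((√2 : ℂ) • Xquad φ) (physHermite k)
      = (√2 : ℂ) ^ k • ∑ ij ∈ antidiagonal k,
          (exp (I * φ) ^ ij.1 * exp (-(I * φ)) ^ ij.2)
            • k.choose ij.1 • (adOp ^ ij.1 * aOp ^ ij.2) := by
  have sqrt_two_mul_self : (√2 : ℂ) * √2 = 2 := by
    rw [← ofReal_mul, Real.mul_self_sqrt zero_le_two, ofReal_ofNat]
  have quadrature : (√2 : ℂ) • (√2 : ℂ) • Xquad φ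
      = exp (I * φ) • adOp + exp (-(I * φ)) • aOp := by
    rw [Xquad, smul_smul, smul_smul, sqrt_two_mul_self, mul_inv_cancel₀ two_ne_zero, one_smul]
  have commutator : (exp (-(I * φ)) • aOp) * (exp (I * φ) • adOp)
      = (exp (I * φ) • adOp) * (exp (-(I * φ)) • aOp) + 1 := by
    rw [smul_mul_smul_comm, smul_mul_smul_comm, ← exp_add, ← exp_add, neg_add_cancel,
      add_neg_cancel, exp_zero, one_smul, one_smul, aOp_mul_adOp]
  rw [aeval_physHermite_eq_smul_normalOrderedPow sqrt_two_mul_self quadrature commutator,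
    normalOrderedPow_smul_smul]

lemma richter_integrand_eq_sum (n m p q : ℕ) (φ : ℝ) :
    (1 / (√(2 ^ (n + m)) : ℂ)) *
        ((aeval ((√2 : ℂ) • Xquad φ) (physHermite (n + m))) (fock q)) p *
        exp (I * (((m : ℤ) - (n : ℤ)) : ℤ) * φ)
      = ∑ ij ∈ antidiagonal (n + m),
          ((n + m).choose ij.1 * ((adOp ^ ij.1 * aOp ^ ij.2) (fock q)) p)
          * exp (2 * ((ij.1 : ℤ) - n : ℤ) * I * φ) := by
  have phase {i j : ℕ} (hij : i + j = n + m) :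
      exp (I * φ) ^ i * exp (-(I * φ)) ^ j * exp (I * (((m : ℤ) - (n : ℤ)) : ℤ) * φ)
        = exp (2 * ((i : ℤ) - n : ℤ) * I * φ) := by
    rw [← exp_nat_mul, ← exp_nat_mul, ← exp_add, ← exp_add]
    have hij' : (i : ℂ) + j = n + m := by exact_mod_cast hij
    congr 1
    push_cast
    linear_combination (-(I * φ)) * hij'
  rw [aeval_physHermite_sqrt_two_smul_Xquad, Real.sqrt_two_pow, ofReal_pow]
  simp only [LinearMap.smul_apply, LinearMap.coe_sum, Finset.sum_apply, Pi.smul_apply,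
    smul_eq_mul, nsmul_eq_mul, Module.End.mul_apply, Module.End.natCast_apply, mul_sum,
    sum_mul, Pi.mul_apply, Pi.natCast_apply]
  refine sum_congr rfl fun ij hij => ?_
  rw [← phase (mem_antidiagonal.1 hij)]
  field_simp

open Real in
/-- Richter's formula at the matrix-element level:
`⟨p| a†ⁿ a^m |q⟩
  = C(n+m,n)⁻¹ (1/π)∫₀^π 2^{-(n+m)/2} ⟨p| H_{n+m}(√2 X_φ) |q⟩ e^{iφ(m-n)} dφ`. -/
theorem richter_formula_matrix_elements (n m p q : ℕ) :
    ((adOp ^ n * aOp ^ m) (fock q)) p =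
      (((n + m).choose n : ℂ))⁻¹ * ((1 / (π : ℂ)) *
        ∫ φ in (0:ℝ)..π,
          (1 / (Real.sqrt (2 ^ (n + m)) : ℂ)) *
            ((Polynomial.aeval ((Real.sqrt 2 : ℂ) • Xquad φ) (physHermite (n + m)))
              (fock q)) p *
            Complex.exp (Complex.I * (((m : ℤ) - (n : ℤ)) : ℤ) * φ)) := by
  have term_integrable : ∀ ij ∈ antidiagonal (n + m), IntervalIntegrable
      (fun φ : ℝ => ((n + m).choose ij.1 * ((adOp ^ ij.1 * aOp ^ ij.2) (fock q)) p)
        * exp (2 * ((ij.1 : ℤ) - n : ℤ) * I * φ)) MeasureTheory.volume 0 π :=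
    fun _ _ => Continuous.intervalIntegrable (by fun_prop) _ _
  have off_diagonal :
      ∀ ij ∈ antidiagonal (n + m), ij ≠ (n, m) → (ij.1 : ℤ) - n ≠ 0 := by
    rintro ⟨i, j⟩ hij hne hi
    rw [HasAntidiagonal.mem_antidiagonal] at hij
    exact hne (Prod.ext (by omega) (by omega))
  rw [intervalIntegral.integral_congr (fun φ _ => richter_integrand_eq_sum n m p q φ),
    intervalIntegral.integral_finsetSum term_integrable]
  simp only [intervalIntegral.integral_const_mul, integral_exp_two_int_mul_I, mul_ite, mul_zero]
  rw [sum_eq_single_of_mem (n, m) (HasAntidiagonal.mem_antidiagonal.2 rfl)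
    (fun ij hij hne => if_neg (off_diagonal ij hij hne)), if_pos (sub_self _)]
  have choose_ne : ((n + m).choose n : ℂ) ≠ 0 :=
    Nat.cast_ne_zero.2 (Nat.choose_pos (by omega)).ne'
  field_simp
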